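/- Let x_1, ..., x_n be i.i.d. real random variables with a distribution absolutely continuous with respect to Lebesgue measure. For 1 ≤ i < j ≤ n, define v̄_{(ij)} = sign(x_i − x_j) − E[sign(x_i − x_j) | x_i] − E[sign(x_i − x_j) | x_j]. Then for any two pairs (i₁, j₁) and (i₂, j₂) with i₁ < j₁ and i₂ < j₂, one has E[v̄_{(i₁j₁)} · v̄_{(i₂j₂)}] = 1/3 if (i₁, j₁) = (i₂, j₂) and = 0 otherwise. -/

import Mathlib

open MeasureTheory ProbabilityTheory

noncomputable section

section Aux
open Set
open scoped ENNReal

lemma measurable_realSign : Measurable Real.sign := by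
  have h : Real.sign = fun r : ℝ =>
      Set.indicator (Set.Iio (0:ℝ)) (fun _ => (-1:ℝ)) r
      + Set.indicator (Set.Ioi (0:ℝ)) (fun _ => (1:ℝ)) r := by
    funext r
    rcases lt_trichotomy r 0 with h | h | h
    · simp [Real.sign_of_neg h, h, asymm h]
    · simp [h, Real.sign_zero]
    · simp [Real.sign_of_pos h, h, asymm h]
  rw [h]
  exact ((measurable_const.indicator measurableSet_Iio).add
    (measurable_const.indicator measurableSet_Ioi))

lemma abs_realSign (r : ℝ) : |Real.sign r| ≤ 1 := by
  rcases Real.sign_apply_eq r with h | h | h <;> rw [h] <;> norm_num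

/-- integrability of bounded measurable functions on finite measure spaces -/
lemma integrable_of_bdd {α : Type*} [MeasurableSpace α] {P : Measure α} [IsFiniteMeasure P]
    {f : α → ℝ} (hf : Measurable f) {C : ℝ} (h : ∀ x, |f x| ≤ C) : Integrable f P := by
  refine ⟨hf.aestronglyMeasurable, ?_⟩
  exact HasFiniteIntegral.of_bounded (C := C) (Filter.Eventually.of_forall (by simpa using h))

namespace Vaux

variable (ν : Measure ℝ)

/-- cdf -/
def F (a : ℝ) : ℝ := (ν (Iic a)).toReal

variable [IsProbabilityMeasure ν]

lemma F_nonneg (a : ℝ) : 0 ≤ F ν a := ENNReal.toReal_nonneg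

lemma F_le_one (a : ℝ) : F ν a ≤ 1 := by
  have := prob_le_one (μ := ν) (s := Iic a)
  simpa [F] using ENNReal.toReal_le_of_le_ofReal zero_le_one (by simpa using this)

lemma measurable_F : Measurable (F ν) := by
  have : Monotone (F ν) := by
    intro a b hab
    exact ENNReal.toReal_mono (measure_ne_top _ _) (measure_mono (Iic_subset_Iic.2 hab))
  exact this.measurable

variable {ν}

lemma measure_Iio (hν : ∀ a : ℝ, ν {a} = 0) (a : ℝ) : ν (Iio a) = ν (Iic a) := by
  rw [← Iio_union_right, measure_union (by simp) (measurableSet_singleton a), hν, add_zero]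

lemma measure_Ioi (a : ℝ) : ν (Ioi a) = 1 - ν (Iic a) := by
  rw [← compl_Iic, measure_compl measurableSet_Iic (measure_ne_top _ _), measure_univ]

lemma integral_sign_right (hν : ∀ a : ℝ, ν {a} = 0) (a : ℝ) :
    ∫ b, Real.sign (a - b) ∂ν = 2 * F ν a - 1 := by
  have hfun : (fun b => Real.sign (a - b)) = fun b =>
      Set.indicator (Set.Iio a) (fun _ => (1:ℝ)) b - Set.indicator (Set.Ioi a) (fun _ => (1:ℝ)) b := by
    funext b
    rcases lt_trichotomy b a with h | h | h
    · simp [Real.sign_of_pos (by linarith : (0:ℝ) < a - b), h, asymm h]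
    · simp [h, Real.sign_zero]
    · simp [Real.sign_of_neg (by linarith : a - b < 0), h, asymm h]
  rw [hfun, integral_sub, integral_indicator measurableSet_Iio, integral_indicator measurableSet_Ioi]
  · simp only [integral_const, smul_eq_mul, mul_one]
    rw [measureReal_def, measureReal_def, Measure.restrict_apply_univ, Measure.restrict_apply_univ,
      measure_Iio hν, measure_Ioi, ENNReal.toReal_sub_of_le prob_le_one ENNReal.one_ne_top]
    simp only [ENNReal.toReal_one, F]
    ring
  · exact (integrable_const (1:ℝ)).indicator measurableSet_Iio
  · exact (integrable_const (1:ℝ)).indicator measurableSet_Ioi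

end Vaux

namespace Vaux
variable {ν : Measure ℝ} [IsProbabilityMeasure ν]

lemma integral_sign_left (hν : ∀ a : ℝ, ν {a} = 0) (b : ℝ) :
    ∫ a, Real.sign (a - b) ∂ν = 1 - 2 * F ν b := by
  have h : (fun a => Real.sign (a - b)) = fun a => -Real.sign (b - a) := by
    funext a; rw [show b - a = -(a - b) by ring, Real.sign_neg]; ring
  rw [h, integral_neg, integral_sign_right hν]; ring

lemma prod_diag_null (hν : ∀ a : ℝ, ν {a} = 0) :
    (ν.prod ν) {p : ℝ × ℝ | p.1 = p.2} = 0 := by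
  have hm : MeasurableSet {p : ℝ × ℝ | p.1 = p.2} :=
    measurableSet_eq_fun measurable_fst measurable_snd
  rw [Measure.prod_apply hm]
  have h : ∀ a : ℝ, ν (Prod.mk a ⁻¹' {p : ℝ × ℝ | p.1 = p.2}) = 0 := by
    intro a
    have : (Prod.mk a ⁻¹' {p : ℝ × ℝ | p.1 = p.2}) = {a} := by ext b; simp [eq_comm]
    rw [this]; exact hν a
  simp [h, hν]

lemma integral_F (hν : ∀ a : ℝ, ν {a} = 0) : ∫ a, F ν a ∂ν = 1 / 2 := by
  set D : Set (ℝ × ℝ) := {p | p.2 ≤ p.1} with hDdef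
  have hD : MeasurableSet D := measurableSet_le measurable_snd measurable_fst
  set D' : Set (ℝ × ℝ) := {p | p.1 ≤ p.2} with hD'def
  have hD' : MeasurableSet D' := measurableSet_le measurable_fst measurable_snd
  have hswap : (ν.prod ν) D' = (ν.prod ν) D := by
    conv_rhs => rw [← Measure.prod_swap]
    rw [Measure.map_apply measurable_swap hD]
    congr 1
  have hunion : D ∪ D' = Set.univ := by
    ext p; simp only [Set.mem_union, Set.mem_univ, iff_true, hDdef, hD'def, Set.mem_setOf_eq]
    exact le_total p.2 p.1
  have hinter : D ∩ D' ⊆ {p : ℝ × ℝ | p.1 = p.2} := by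
    intro p hp; exact le_antisymm hp.2 hp.1
  have hinter0 : (ν.prod ν) (D ∩ D') = 0 :=
    measure_mono_null hinter (prod_diag_null hν)
  have hkey : (ν.prod ν) D + (ν.prod ν) D' = 1 := by
    rw [← measure_union_add_inter D hD', hunion, hinter0, add_zero, measure_univ]
  rw [hswap] at hkey
  have hne := measure_ne_top (ν.prod ν) D
  have htr : ((ν.prod ν) D).toReal + ((ν.prod ν) D).toReal = 1 := by
    rw [← ENNReal.toReal_add hne hne, hkey, ENNReal.toReal_one]
  have hFi : ∫ a, F ν a ∂ν = ((ν.prod ν) D).toReal := by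
    have hint : Integrable (D.indicator (fun _ => (1:ℝ))) (ν.prod ν) :=
      integrable_of_bdd (measurable_const.indicator hD) (C := 1)
        (fun p => by by_cases hp : p ∈ D <;> simp [hp])
    have h1 : ∫ p, D.indicator (fun _ => (1:ℝ)) p ∂(ν.prod ν) = ((ν.prod ν) D).toReal := by
      rw [integral_indicator hD]; simp; rfl
    rw [← h1, integral_prod _ hint]
    refine integral_congr_ae (Filter.Eventually.of_forall fun a => ?_)
    have hbeq : ∀ b : ℝ, D.indicator (fun _ => (1:ℝ)) (a, b)
        = (Iic a).indicator (fun _ => (1:ℝ)) b := by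
      intro b; by_cases hb : b ≤ a <;> simp [hDdef, hb]
    simp_rw [hbeq]
    rw [integral_indicator measurableSet_Iic]
    simp [F]; rfl
  linarith

end Vaux

namespace Vaux
variable {ν : Measure ℝ} [IsProbabilityMeasure ν]

lemma integral_F_sq (hν : ∀ a : ℝ, ν {a} = 0) : ∫ a, (F ν a) ^ 2 ∂ν = 1 / 3 := by
  set P3 : Measure (ℝ × ℝ × ℝ) := ν.prod (ν.prod ν) with hP3
  haveI : IsProbabilityMeasure P3 := by rw [hP3]; infer_instance
  set E₁ : Set (ℝ × ℝ × ℝ) := {p | p.2.1 ≤ p.1 ∧ p.2.2 ≤ p.1} with hE₁def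
  set E₂ : Set (ℝ × ℝ × ℝ) := {p | p.1 ≤ p.2.1 ∧ p.2.2 ≤ p.2.1} with hE₂def
  set E₃ : Set (ℝ × ℝ × ℝ) := {p | p.1 ≤ p.2.2 ∧ p.2.1 ≤ p.2.2} with hE₃def
  have m1 : Measurable fun p : ℝ × ℝ × ℝ => p.1 := measurable_fst
  have m2 : Measurable fun p : ℝ × ℝ × ℝ => p.2.1 := measurable_fst.comp measurable_snd
  have m3 : Measurable fun p : ℝ × ℝ × ℝ => p.2.2 := measurable_snd.comp measurable_snd
  have hE₁ : MeasurableSet E₁ := (measurableSet_le m2 m1).inter (measurableSet_le m3 m1)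
  have hE₂ : MeasurableSet E₂ := (measurableSet_le m1 m2).inter (measurableSet_le m3 m2)
  have hE₃ : MeasurableSet E₃ := (measurableSet_le m1 m3).inter (measurableSet_le m2 m3)
  -- the cyclic map is measure preserving
  have hcyc : MeasurePreserving (fun p : ℝ × ℝ × ℝ => (p.2.1, p.2.2, p.1)) P3 P3 := by
    have h1 : MeasurePreserving (Prod.swap : ℝ × (ℝ × ℝ) → (ℝ × ℝ) × ℝ)
        (ν.prod (ν.prod ν)) ((ν.prod ν).prod ν) := Measure.measurePreserving_swap
    have h2 := measurePreserving_prodAssoc ν ν ν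
    exact (h2.comp h1 : _)
  have e12 : (fun p : ℝ × ℝ × ℝ => (p.2.1, p.2.2, p.1)) ⁻¹' E₁ = E₂ := by
    ext p; simp only [hE₁def, hE₂def, Set.mem_preimage, Set.mem_setOf_eq]; tauto
  have e23 : (fun p : ℝ × ℝ × ℝ => (p.2.1, p.2.2, p.1)) ⁻¹' E₂ = E₃ := by
    ext p; simp only [hE₂def, hE₃def, Set.mem_preimage, Set.mem_setOf_eq]; tauto
  have hm12 : P3 E₂ = P3 E₁ := by rw [← e12, hcyc.measure_preimage hE₁.nullMeasurableSet]
  have hm23 : P3 E₃ = P3 E₂ := by rw [← e23, hcyc.measure_preimage hE₂.nullMeasurableSet]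
  -- null pairwise intersections
  have null1 : P3 {p : ℝ × ℝ × ℝ | p.1 = p.2.1} = 0 := by
    have hm : MeasurableSet {p : ℝ × ℝ × ℝ | p.1 = p.2.1} := measurableSet_eq_fun m1 m2
    rw [hP3, Measure.prod_apply hm]
    have h : ∀ a : ℝ, (ν.prod ν) (Prod.mk a ⁻¹' {p : ℝ × ℝ × ℝ | p.1 = p.2.1}) = 0 := by
      intro a
      have : (Prod.mk a ⁻¹' {p : ℝ × ℝ × ℝ | p.1 = p.2.1}) = ({a} : Set ℝ) ×ˢ (univ : Set ℝ) := by
        ext q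
        simp only [Set.mem_preimage, Set.mem_setOf_eq, Set.mem_prod, Set.mem_singleton_iff,
          Set.mem_univ, and_true, eq_comm]
      rw [this, Measure.prod_prod, hν a, zero_mul]
    simp only [h, lintegral_zero]
  have null2 : P3 {p : ℝ × ℝ × ℝ | p.1 = p.2.2} = 0 := by
    have hm : MeasurableSet {p : ℝ × ℝ × ℝ | p.1 = p.2.2} := measurableSet_eq_fun m1 m3
    rw [hP3, Measure.prod_apply hm]
    have h : ∀ a : ℝ, (ν.prod ν) (Prod.mk a ⁻¹' {p : ℝ × ℝ × ℝ | p.1 = p.2.2}) = 0 := by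
      intro a
      have : (Prod.mk a ⁻¹' {p : ℝ × ℝ × ℝ | p.1 = p.2.2}) = (univ : Set ℝ) ×ˢ ({a} : Set ℝ) := by
        ext q
        simp only [Set.mem_preimage, Set.mem_setOf_eq, Set.mem_prod, Set.mem_singleton_iff,
          Set.mem_univ, true_and, eq_comm]
      rw [this, Measure.prod_prod, hν a, mul_zero]
    simp only [h, lintegral_zero]
  have null3 : P3 {p : ℝ × ℝ × ℝ | p.2.1 = p.2.2} = 0 := by
    have hm : MeasurableSet {p : ℝ × ℝ × ℝ | p.2.1 = p.2.2} := measurableSet_eq_fun m2 m3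
    rw [hP3, Measure.prod_apply hm]
    have h : ∀ a : ℝ, (ν.prod ν) (Prod.mk a ⁻¹' {p : ℝ × ℝ × ℝ | p.2.1 = p.2.2}) = 0 := by
      intro a
      have heq : (Prod.mk a ⁻¹' {p : ℝ × ℝ × ℝ | p.2.1 = p.2.2}) = {q : ℝ × ℝ | q.1 = q.2} := by
        ext q; simp only [Set.mem_preimage, Set.mem_setOf_eq]
      rw [heq]; exact prod_diag_null hν
    simp only [h, lintegral_zero]
  -- union is everything
  have hunion : E₁ ∪ (E₂ ∪ E₃) = Set.univ := by
    ext p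
    simp only [Set.mem_union, Set.mem_univ, iff_true, hE₁def, hE₂def, hE₃def, Set.mem_setOf_eq]
    rcases le_total p.1 p.2.1 with h1 | h1 <;> rcases le_total p.1 p.2.2 with h2 | h2 <;>
      rcases le_total p.2.1 p.2.2 with h3 | h3 <;>
      first
        | exact Or.inl ⟨by linarith, by linarith⟩
        | exact Or.inr (Or.inl ⟨by linarith, by linarith⟩)
        | exact Or.inr (Or.inr ⟨by linarith, by linarith⟩)
  have d12 : AEDisjoint P3 E₁ E₂ :=
    measure_mono_null (fun p hp => le_antisymm hp.2.1 hp.1.1) null1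
  have d13 : AEDisjoint P3 E₁ E₃ :=
    measure_mono_null (fun p hp => le_antisymm hp.2.1 hp.1.2) null2
  have d23 : AEDisjoint P3 E₂ E₃ :=
    measure_mono_null (fun p hp => le_antisymm hp.2.2 hp.1.2) null3
  have h23 : P3 (E₂ ∪ E₃) = P3 E₂ + P3 E₃ := measure_union₀ hE₃.nullMeasurableSet d23
  have d123 : AEDisjoint P3 E₁ (E₂ ∪ E₃) := by
    have : E₁ ∩ (E₂ ∪ E₃) ⊆ (E₁ ∩ E₂) ∪ (E₁ ∩ E₃) := by
      intro p hp; rcases hp.2 with h | h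
      · exact Or.inl ⟨hp.1, h⟩
      · exact Or.inr ⟨hp.1, h⟩
    exact measure_mono_null this (by
      refine le_antisymm (le_trans (measure_union_le _ _) ?_) zero_le
      rw [d12, d13]; simp)
  have hthree : (1 : ℝ≥0∞) = P3 E₁ + (P3 E₁ + P3 E₁) := by
    conv_lhs => rw [← measure_univ (μ := P3), ← hunion]
    rw [measure_union₀ (hE₂.union hE₃).nullMeasurableSet d123, h23, hm12, hm23, hm12]
  have hne := measure_ne_top P3 E₁
  have htr : (1 : ℝ) = (P3 E₁).toReal + ((P3 E₁).toReal + (P3 E₁).toReal) := by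
    have := congrArg ENNReal.toReal hthree
    rwa [ENNReal.toReal_one, ENNReal.toReal_add hne (ENNReal.add_ne_top.mpr ⟨hne, hne⟩),
      ENNReal.toReal_add hne hne] at this
  -- identify the integral
  have hFi : ∫ a, (F ν a) ^ 2 ∂ν = (P3 E₁).toReal := by
    have hint : Integrable (E₁.indicator fun _ => (1:ℝ)) P3 :=
      integrable_of_bdd (measurable_const.indicator hE₁) (C := 1)
        (fun p => by by_cases hp : p ∈ E₁ <;> simp [hp])
    have h1 : ∫ p, E₁.indicator (fun _ => (1:ℝ)) p ∂P3 = (P3 E₁).toReal := by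
      rw [integral_indicator hE₁]; simp; rfl
    rw [← h1, hP3, integral_prod _ (by rw [← hP3]; exact hint)]
    refine integral_congr_ae (Filter.Eventually.of_forall fun a => ?_)
    have hbeq : ∀ q : ℝ × ℝ, E₁.indicator (fun _ => (1:ℝ)) (a, q)
        = (Iic a).indicator (fun _ => (1:ℝ)) q.1 * (Iic a).indicator (fun _ => (1:ℝ)) q.2 := by
      intro q
      by_cases h1 : q.1 ≤ a <;> by_cases h2 : q.2 ≤ a <;>
        simp [hE₁def, Set.indicator_apply, h1, h2]
    simp_rw [hbeq]
    rw [integral_prod_mul, integral_indicator measurableSet_Iic]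
    simp [F, pow_two]; rfl
  rw [hFi]; linarith

end Vaux

namespace Vaux
variable {ν : Measure ℝ} [IsProbabilityMeasure ν]

/-- The projected kernel. -/
def g (ν : Measure ℝ) (a b : ℝ) : ℝ := Real.sign (a - b) - 2 * F ν a + 2 * F ν b

lemma abs_F_le (a : ℝ) : |F ν a| ≤ 1 :=
  abs_le.mpr ⟨by linarith [F_nonneg ν a], F_le_one ν a⟩

lemma measurable_g2 : Measurable (fun p : ℝ × ℝ => g ν p.1 p.2) := by
  unfold g
  exact ((measurable_realSign.comp (measurable_fst.sub measurable_snd)).sub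
    (((measurable_F ν).comp measurable_fst).const_mul 2)).add
    (((measurable_F ν).comp measurable_snd).const_mul 2)

lemma abs_g_le (a b : ℝ) : |g ν a b| ≤ 5 := by
  unfold g
  have h1 := abs_realSign (a - b)
  have h2 := abs_F_le (ν := ν) a
  have h3 := abs_F_le (ν := ν) b
  rw [abs_le] at *
  constructor <;> nlinarith

lemma integral_g_right (hν : ∀ a : ℝ, ν {a} = 0) (a : ℝ) : ∫ b, g ν a b ∂ν = 0 := by
  unfold g
  have i1 : Integrable (fun b => Real.sign (a - b)) ν :=
    integrable_of_bdd (measurable_realSign.comp (measurable_const.sub measurable_id))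
      (C := 1) (fun b => abs_realSign _)
  have i2 : Integrable (fun _ : ℝ => 2 * F ν a) ν := integrable_const _
  have i3 : Integrable (fun b => 2 * F ν b) ν :=
    (integrable_of_bdd (measurable_F ν) (C := 1) (fun b => abs_F_le b)).const_mul 2
  have i12 : Integrable (fun b => Real.sign (a - b) - 2 * F ν a) ν := i1.sub i2
  have hc : ∫ _ : ℝ, 2 * F ν a ∂ν = 2 * F ν a := by simp
  rw [integral_add i12 i3, integral_sub i1 i2, integral_sign_right hν, hc,
    integral_const_mul, integral_F hν]
  ring

lemma integral_g_left (hν : ∀ a : ℝ, ν {a} = 0) (b : ℝ) : ∫ a, g ν a b ∂ν = 0 := by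
  unfold g
  have i1 : Integrable (fun a => Real.sign (a - b)) ν :=
    integrable_of_bdd (measurable_realSign.comp (measurable_id.sub measurable_const))
      (C := 1) (fun a => abs_realSign _)
  have i2 : Integrable (fun a : ℝ => 2 * F ν a) ν :=
    (integrable_of_bdd (measurable_F ν) (C := 1) (fun a => abs_F_le a)).const_mul 2
  have i3 : Integrable (fun _ : ℝ => 2 * F ν b) ν := integrable_const _
  have i12 : Integrable (fun a => Real.sign (a - b) - 2 * F ν a) ν := i1.sub i2
  have hc : ∫ _ : ℝ, 2 * F ν b ∂ν = 2 * F ν b := by simp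
  rw [integral_add i12 i3, integral_sub i1 i2, integral_sign_left hν, hc,
    integral_const_mul, integral_F hν]
  ring

end Vaux

namespace Vaux
variable {ν : Measure ℝ} [IsProbabilityMeasure ν]

lemma msgn : Measurable (fun p : ℝ × ℝ => Real.sign (p.1 - p.2)) :=
  measurable_realSign.comp (measurable_fst.sub measurable_snd)

lemma mF1 : Measurable (fun p : ℝ × ℝ => F ν p.1) := (measurable_F ν).comp measurable_fst
lemma mF2 : Measurable (fun p : ℝ × ℝ => F ν p.2) := (measurable_F ν).comp measurable_snd

lemma integral_g_sq (hν : ∀ a : ℝ, ν {a} = 0) :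
    ∫ p : ℝ × ℝ, (g ν p.1 p.2) ^ 2 ∂(ν.prod ν) = 1 / 3 := by
  set P := ν.prod ν with hP
  haveI : IsProbabilityMeasure P := by rw [hP]; infer_instance
  set s : ℝ × ℝ → ℝ := fun p => Real.sign (p.1 - p.2) with hs
  set F₁ : ℝ × ℝ → ℝ := fun p => F ν p.1 with hF1
  set F₂ : ℝ × ℝ → ℝ := fun p => F ν p.2 with hF2
  -- integrability of the pieces
  have habs : ∀ p : ℝ × ℝ, |s p| ≤ 1 := fun p => abs_realSign _
  have hb1 : ∀ p : ℝ × ℝ, |F₁ p| ≤ 1 := fun p => abs_F_le _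
  have hb2 : ∀ p : ℝ × ℝ, |F₂ p| ≤ 1 := fun p => abs_F_le _
  have mulb : ∀ x y : ℝ, |x| ≤ 1 → |y| ≤ 1 → |x * y| ≤ 1 := by
    intro x y hx hy
    rw [abs_mul]
    nlinarith [abs_nonneg x, abs_nonneg y]
  have ia : Integrable (fun p => s p * s p) P :=
    integrable_of_bdd (msgn.mul msgn) (C := 1) (fun p => mulb _ _ (habs p) (habs p))
  have ib : Integrable (fun p => F₁ p * F₁ p) P :=
    integrable_of_bdd (mF1.mul mF1) (C := 1) (fun p => mulb _ _ (hb1 p) (hb1 p))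
  have ic : Integrable (fun p => F₂ p * F₂ p) P :=
    integrable_of_bdd (mF2.mul mF2) (C := 1) (fun p => mulb _ _ (hb2 p) (hb2 p))
  have id' : Integrable (fun p => s p * F₁ p) P :=
    integrable_of_bdd (msgn.mul mF1) (C := 1) (fun p => mulb _ _ (habs p) (hb1 p))
  have ie : Integrable (fun p => s p * F₂ p) P :=
    integrable_of_bdd (msgn.mul mF2) (C := 1) (fun p => mulb _ _ (habs p) (hb2 p))
  have if' : Integrable (fun p => F₁ p * F₂ p) P :=
    integrable_of_bdd (mF1.mul mF2) (C := 1) (fun p => mulb _ _ (hb1 p) (hb2 p))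
  -- the six base integrals
  have hA : ∫ p, s p * s p ∂P = 1 := by
    have hdiag : ∀ᵐ p ∂P, p.1 ≠ (p.2 : ℝ) := by
      rw [ae_iff]
      have : {p : ℝ × ℝ | ¬ p.1 ≠ p.2} = {p : ℝ × ℝ | p.1 = p.2} := by
        ext p; simp
      rw [this]; exact prod_diag_null hν
    have hae : (fun p => s p * s p) =ᵐ[P] fun _ => (1 : ℝ) := by
      filter_upwards [hdiag] with p hp
      rcases lt_or_gt_of_ne (sub_ne_zero.mpr hp) with h | h
      · rw [hs]; simp only; rw [Real.sign_of_neg h]; norm_num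
      · rw [hs]; simp only; rw [Real.sign_of_pos h]; norm_num
    rw [integral_congr_ae hae]; simp
  have iF : Integrable (F ν) ν :=
    integrable_of_bdd (measurable_F ν) (C := 1) (fun a => abs_F_le a)
  have iFsq : Integrable (fun a => F ν a * F ν a) ν :=
    integrable_of_bdd ((measurable_F ν).mul (measurable_F ν)) (C := 1)
      (fun a => mulb _ _ (abs_F_le a) (abs_F_le a))
  have hm2 : ∫ a, F ν a * F ν a ∂ν = 1 / 3 := by
    rw [← integral_F_sq (ν := ν) hν]
    exact integral_congr_ae (Filter.Eventually.of_forall fun a => by simp [pow_two])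
  have hB : ∫ p, s p * F₁ p ∂P = 1 / 6 := by
    rw [hP, integral_prod _ (by rw [← hP]; exact id')]
    simp only [hs, hF1]
    have hinner : ∀ a : ℝ, (∫ b, Real.sign (a - b) * F ν a ∂ν)
        = 2 * (F ν a * F ν a) - F ν a := by
      intro a
      rw [integral_mul_const, integral_sign_right hν]; ring
    rw [integral_congr_ae (Filter.Eventually.of_forall hinner),
      integral_sub (iFsq.const_mul 2) iF, integral_const_mul, hm2, integral_F hν]
    norm_num
  have hC : ∫ p, s p * F₂ p ∂P = -(1 / 6) := by
    rw [hP, integral_prod_symm _ (by rw [← hP]; exact ie)]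
    simp only [hs, hF2]
    have hinner : ∀ b : ℝ, (∫ a, Real.sign (a - b) * F ν b ∂ν)
        = F ν b - 2 * (F ν b * F ν b) := by
      intro b
      rw [integral_mul_const, integral_sign_left hν]; ring
    rw [integral_congr_ae (Filter.Eventually.of_forall hinner),
      integral_sub iF (iFsq.const_mul 2), integral_const_mul, hm2, integral_F hν]
    norm_num
  have hD : ∫ p, F₁ p * F₁ p ∂P = 1 / 3 := by
    rw [hP, integral_prod _ (by rw [← hP]; exact ib)]
    simp only [hF1, integral_const, measureReal_def, measure_univ, ENNReal.toReal_one, smul_eq_mul, one_mul]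
    exact hm2
  have hE : ∫ p, F₂ p * F₂ p ∂P = 1 / 3 := by
    rw [hP, integral_prod_symm _ (by rw [← hP]; exact ic)]
    simp only [hF2, integral_const, measureReal_def, measure_univ, ENNReal.toReal_one, smul_eq_mul, one_mul]
    exact hm2
  have hG : ∫ p, F₁ p * F₂ p ∂P = 1 / 4 := by
    rw [hP, integral_prod _ (by rw [← hP]; exact if')]
    simp only [hF1, hF2]
    have hinner : ∀ a : ℝ, (∫ b, F ν a * F ν b ∂ν) = F ν a * (1 / 2) := by
      intro a; rw [integral_const_mul, integral_F hν]
    rw [integral_congr_ae (Filter.Eventually.of_forall hinner), integral_mul_const,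
      integral_F hν]
    norm_num
  -- expand the square
  have hexp : ∀ p : ℝ × ℝ, (g ν p.1 p.2) ^ 2
      = s p * s p + 4 * (F₁ p * F₁ p) + 4 * (F₂ p * F₂ p) - 4 * (s p * F₁ p)
        + 4 * (s p * F₂ p) - 8 * (F₁ p * F₂ p) := by
    intro p; simp only [hs, hF1, hF2, g]; ring
  rw [integral_congr_ae (Filter.Eventually.of_forall hexp)]
  have i_ab : Integrable (fun p => s p * s p + 4 * (F₁ p * F₁ p)) P := ia.add (ib.const_mul 4)
  have i_abc : Integrable (fun p => s p * s p + 4 * (F₁ p * F₁ p) + 4 * (F₂ p * F₂ p)) P :=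
    i_ab.add (ic.const_mul 4)
  have i_abcd : Integrable (fun p => s p * s p + 4 * (F₁ p * F₁ p) + 4 * (F₂ p * F₂ p)
      - 4 * (s p * F₁ p)) P := i_abc.sub (id'.const_mul 4)
  have i_abcde : Integrable (fun p => s p * s p + 4 * (F₁ p * F₁ p) + 4 * (F₂ p * F₂ p)
      - 4 * (s p * F₁ p) + 4 * (s p * F₂ p)) P := i_abcd.add (ie.const_mul 4)
  rw [integral_sub i_abcde (if'.const_mul 8), integral_add i_abcd (ie.const_mul 4),
    integral_sub i_abc (id'.const_mul 4), integral_add i_ab (ic.const_mul 4),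
    integral_add ia (ib.const_mul 4), integral_const_mul, integral_const_mul,
    integral_const_mul, integral_const_mul, integral_const_mul,
    hA, hB, hC, hD, hE, hG]
  norm_num

end Vaux

lemma abs_mul_le_of_le {x y C D : ℝ} (hx : |x| ≤ C) (hy : |y| ≤ D) : |x * y| ≤ C * D := by
  rw [abs_mul]
  exact mul_le_mul hx hy (abs_nonneg y) ((abs_nonneg x).trans hx)

end Aux

open Vaux

/-- The Hoeffding residual
`v̄_{(ij)} = sign(x_i - x_j) - E[sign(x_i - x_j) | x_i] - E[sign(x_i - x_j) | x_j]`. -/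
def vbar {Ω : Type*} [MeasurableSpace Ω] (μ : Measure Ω) {n : ℕ}
    (x : Fin n → Ω → ℝ) (i j : Fin n) : Ω → ℝ :=
  fun ω => Real.sign (x i ω - x j ω)
    - (μ[fun ω' => Real.sign (x i ω' - x j ω') |
        MeasurableSpace.comap (x i) inferInstance]) ω
    - (μ[fun ω' => Real.sign (x i ω' - x j ω') |
        MeasurableSpace.comap (x j) inferInstance]) ω

/-- For i.i.d. real random variables `x_1, …, x_n` with absolutely continuous law,
`E[v̄_{(i₁j₁)} v̄_{(i₂j₂)}] = 1/3` if `(i₁,j₁) = (i₂,j₂)` (with `i₁<j₁`, `i₂<j₂`)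
and `0` otherwise. -/
theorem vbar_covariance
    {Ω : Type*} [MeasurableSpace Ω] (μ : Measure Ω) [IsProbabilityMeasure μ]
    {n : ℕ} (x : Fin n → Ω → ℝ)
    (hmeas : ∀ i, Measurable (x i))
    (hindep : iIndepFun x μ)
    (hident : ∀ i j, μ.map (x i) = μ.map (x j))
    (hac : ∀ i, μ.map (x i) ≪ volume) :
    ∀ i₁ j₁ i₂ j₂ : Fin n, i₁ < j₁ → i₂ < j₂ →
      ∫ ω, vbar μ x i₁ j₁ ω * vbar μ x i₂ j₂ ω ∂μ =
        if (i₁, j₁) = (i₂, j₂) then 1 / 3 else 0 := by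
  intro i₁ j₁ i₂ j₂ h₁ h₂
  set ν : Measure ℝ := μ.map (x i₁) with hν_def
  haveI : IsProbabilityMeasure ν := Measure.isProbabilityMeasure_map (hmeas i₁).aemeasurable
  have hmap : ∀ i, μ.map (x i) = ν := fun i => hident i i₁
  have hatom : ∀ a : ℝ, ν {a} = 0 := fun a => (hac i₁) (by simp)
  have hpair : ∀ i j : Fin n, i ≠ j → μ.map (fun ω => (x i ω, x j ω)) = ν.prod ν := by
    intro i j hij
    have h := (indepFun_iff_map_prod_eq_prod_map_map (hmeas i).aemeasurable
      (hmeas j).aemeasurable).mp (hindep.indepFun hij)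
    rwa [hmap i, hmap j] at h
  -- identification of the first conditional expectation
  have hsub1 : ∀ i j : Fin n, i ≠ j →
      (μ[fun ω' => Real.sign (x i ω' - x j ω') |
        MeasurableSpace.comap (x i) inferInstance])
        =ᵐ[μ] fun ω => 2 * F ν (x i ω) - 1 := by
    intro i j hij
    have hm : MeasurableSpace.comap (x i) inferInstance ≤ _ := (hmeas i).comap_le
    have hxi : @Measurable Ω ℝ (MeasurableSpace.comap (x i) inferInstance) _ (x i) :=
      measurable_iff_comap_le.mpr le_rfl
    have hfmeas : Measurable fun ω => Real.sign (x i ω - x j ω) :=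
      measurable_realSign.comp ((hmeas i).sub (hmeas j))
    have hf : Integrable (fun ω => Real.sign (x i ω - x j ω)) μ :=
      integrable_of_bdd hfmeas (C := 1) (fun ω => abs_realSign _)
    have hgmeas : Measurable fun a : ℝ => 2 * F ν a - 1 :=
      ((measurable_F ν).const_mul 2).sub_const 1
    have hg : Integrable (fun ω => 2 * F ν (x i ω) - 1) μ :=
      integrable_of_bdd (hgmeas.comp (hmeas i)) (C := 3)
        (fun ω => by
          have := abs_F_le (ν := ν) (x i ω)
          rw [abs_le] at *
          constructor <;> linarith [this.1, this.2])
    refine (ae_eq_condExp_of_forall_setIntegral_eq hm hf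
      (fun s _ _ => hg.integrableOn) ?_ ?_).symm
    · rintro s ⟨t, ht, rfl⟩ -
      have hL : ∫ ω in x i ⁻¹' t, (2 * F ν (x i ω) - 1) ∂μ
          = ∫ a in t, (2 * F ν a - 1) ∂ν := by
        have h := setIntegral_map (μ := μ) ht hgmeas.aestronglyMeasurable
          (hmeas i).aemeasurable
        rw [hmap i] at h
        exact h.symm
      rw [hL]
      set Φ : ℝ × ℝ → ℝ :=
        fun p => t.indicator (fun _ => (1:ℝ)) p.1 * Real.sign (p.1 - p.2) with hΦ
      have hΦmeas : Measurable Φ :=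
        ((measurable_const.indicator ht).comp measurable_fst).mul msgn
      have hind_bd : ∀ a : ℝ, |t.indicator (fun _ => (1:ℝ)) a| ≤ 1 := by
        intro a; by_cases hp : a ∈ t <;> simp [hp]
      have hΦbdd : ∀ p, |Φ p| ≤ 1 := by
        intro p
        have := abs_mul_le_of_le (hind_bd p.1) (abs_realSign (p.1 - p.2))
        simpa [hΦ] using this
      have hR : ∫ ω in x i ⁻¹' t, Real.sign (x i ω - x j ω) ∂μ
          = ∫ a in t, (2 * F ν a - 1) ∂ν := by
        rw [← integral_indicator ((hmeas i) ht)]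
        have hpt : ∀ ω, (x i ⁻¹' t).indicator (fun ω' => Real.sign (x i ω' - x j ω')) ω
            = Φ (x i ω, x j ω) := by
          intro ω
          by_cases hω : x i ω ∈ t <;> simp [hΦ, Set.indicator_apply, hω]
        rw [integral_congr_ae (Filter.Eventually.of_forall hpt),
          ← integral_map ((hmeas i).aemeasurable.prodMk (hmeas j).aemeasurable)
            hΦmeas.aestronglyMeasurable,
          hpair i j hij, integral_prod _ (integrable_of_bdd hΦmeas (C := 1) hΦbdd)]
        have hin : ∀ a : ℝ, (∫ b, Φ (a, b) ∂ν)
            = t.indicator (fun a' => 2 * F ν a' - 1) a := by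
          intro a
          simp only [hΦ]
          rw [integral_const_mul, integral_sign_right hatom]
          by_cases ha : a ∈ t <;> simp [ha]
        rw [integral_congr_ae (Filter.Eventually.of_forall hin), integral_indicator ht]
      exact hR.symm
    · exact StronglyMeasurable.aestronglyMeasurable
        (Measurable.stronglyMeasurable (hgmeas.comp hxi))
  -- identification of the second conditional expectation
  have hsub2 : ∀ i j : Fin n, i ≠ j →
      (μ[fun ω' => Real.sign (x i ω' - x j ω') |
        MeasurableSpace.comap (x j) inferInstance])
        =ᵐ[μ] fun ω => 1 - 2 * F ν (x j ω) := by
    intro i j hij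
    have hm : MeasurableSpace.comap (x j) inferInstance ≤ _ := (hmeas j).comap_le
    have hxj : @Measurable Ω ℝ (MeasurableSpace.comap (x j) inferInstance) _ (x j) :=
      measurable_iff_comap_le.mpr le_rfl
    have hfmeas : Measurable fun ω => Real.sign (x i ω - x j ω) :=
      measurable_realSign.comp ((hmeas i).sub (hmeas j))
    have hf : Integrable (fun ω => Real.sign (x i ω - x j ω)) μ :=
      integrable_of_bdd hfmeas (C := 1) (fun ω => abs_realSign _)
    have hgmeas : Measurable fun b : ℝ => 1 - 2 * F ν b :=
      measurable_const.sub ((measurable_F ν).const_mul 2)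
    have hg : Integrable (fun ω => 1 - 2 * F ν (x j ω)) μ :=
      integrable_of_bdd (hgmeas.comp (hmeas j)) (C := 3)
        (fun ω => by
          have := abs_F_le (ν := ν) (x j ω)
          rw [abs_le] at *
          constructor <;> linarith [this.1, this.2])
    refine (ae_eq_condExp_of_forall_setIntegral_eq hm hf
      (fun s _ _ => hg.integrableOn) ?_ ?_).symm
    · rintro s ⟨t, ht, rfl⟩ -
      have hL : ∫ ω in x j ⁻¹' t, (1 - 2 * F ν (x j ω)) ∂μ
          = ∫ b in t, (1 - 2 * F ν b) ∂ν := by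
        have h := setIntegral_map (μ := μ) ht hgmeas.aestronglyMeasurable
          (hmeas j).aemeasurable
        rw [hmap j] at h
        exact h.symm
      rw [hL]
      set Φ : ℝ × ℝ → ℝ :=
        fun p => t.indicator (fun _ => (1:ℝ)) p.2 * Real.sign (p.1 - p.2) with hΦ
      have hΦmeas : Measurable Φ :=
        ((measurable_const.indicator ht).comp measurable_snd).mul msgn
      have hind_bd : ∀ a : ℝ, |t.indicator (fun _ => (1:ℝ)) a| ≤ 1 := by
        intro a; by_cases hp : a ∈ t <;> simp [hp]
      have hΦbdd : ∀ p, |Φ p| ≤ 1 := by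
        intro p
        have := abs_mul_le_of_le (hind_bd p.2) (abs_realSign (p.1 - p.2))
        simpa [hΦ] using this
      have hR : ∫ ω in x j ⁻¹' t, Real.sign (x i ω - x j ω) ∂μ
          = ∫ b in t, (1 - 2 * F ν b) ∂ν := by
        rw [← integral_indicator ((hmeas j) ht)]
        have hpt : ∀ ω, (x j ⁻¹' t).indicator (fun ω' => Real.sign (x i ω' - x j ω')) ω
            = Φ (x i ω, x j ω) := by
          intro ω
          by_cases hω : x j ω ∈ t <;> simp [hΦ, Set.indicator_apply, hω]
        rw [integral_congr_ae (Filter.Eventually.of_forall hpt),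
          ← integral_map ((hmeas i).aemeasurable.prodMk (hmeas j).aemeasurable)
            hΦmeas.aestronglyMeasurable,
          hpair i j hij, integral_prod_symm _ (integrable_of_bdd hΦmeas (C := 1) hΦbdd)]
        have hin : ∀ b : ℝ, (∫ a, Φ (a, b) ∂ν)
            = t.indicator (fun b' => 1 - 2 * F ν b') b := by
          intro b
          simp only [hΦ]
          rw [integral_const_mul, integral_sign_left hatom]
          by_cases hb : b ∈ t <;> simp [hb]
        rw [integral_congr_ae (Filter.Eventually.of_forall hin), integral_indicator ht]
      exact hR.symm
    · exact StronglyMeasurable.aestronglyMeasurable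
        (Measurable.stronglyMeasurable (hgmeas.comp hxj))
  -- the residual equals the explicit kernel a.e.
  have hvbar : ∀ i j : Fin n, i ≠ j →
      vbar μ x i j =ᵐ[μ] fun ω => g ν (x i ω) (x j ω) := by
    intro i j hij
    filter_upwards [hsub1 i j hij, hsub2 i j hij] with ω e1 e2
    simp only [vbar]
    rw [e1, e2]
    simp only [g]
    ring
  have hprodae : (fun ω => vbar μ x i₁ j₁ ω * vbar μ x i₂ j₂ ω)
      =ᵐ[μ] fun ω => g ν (x i₁ ω) (x j₁ ω) * g ν (x i₂ ω) (x j₂ ω) :=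
    (hvbar i₁ j₁ h₁.ne).mul (hvbar i₂ j₂ h₂.ne)
  rw [integral_congr_ae hprodae]
  -- the key vanishing lemma for distinct pairs
  have hkey : ∀ (t s u v : Fin n) (G : ℝ → ℝ → ℝ),
      Measurable (fun p : ℝ × ℝ => G p.1 p.2) → (∀ a b, |G a b| ≤ 5) →
      (∀ b : ℝ, ∫ a, G a b ∂ν = 0) → t ≠ s → t ≠ u → t ≠ v →
      ∫ ω, G (x t ω) (x s ω) * g ν (x u ω) (x v ω) ∂μ = 0 := by
    intro t s u v G hGm hGb hGz hts htu htv
    classical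
    set Y : Ω → ℝ × ℝ × ℝ := fun ω => (x s ω, x u ω, x v ω) with hY
    have hYmeas : Measurable Y := (hmeas s).prodMk ((hmeas u).prodMk (hmeas v))
    have hmem_s : s ∈ ({s, u, v} : Finset (Fin n)) := by simp
    have hmem_u : u ∈ ({s, u, v} : Finset (Fin n)) := by simp
    have hmem_v : v ∈ ({s, u, v} : Finset (Fin n)) := by simp
    have hfin := hindep.indepFun_finset {t} ({s, u, v} : Finset (Fin n))
      (by
        simp only [Finset.disjoint_singleton_left, Finset.mem_insert, Finset.mem_singleton]
        push_neg
        exact ⟨hts, htu, htv⟩) hmeas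
    have hindepY : IndepFun (x t) Y μ := by
      have := hfin.comp
        (φ := fun f : (({t} : Finset (Fin n)) → ℝ) => f ⟨t, by simp⟩)
        (ψ := fun f : (({s, u, v} : Finset (Fin n)) → ℝ) =>
          (f ⟨s, hmem_s⟩, f ⟨u, hmem_u⟩, f ⟨v, hmem_v⟩))
        (show Measurable (fun f : (({t} : Finset (Fin n)) → ℝ) => f ⟨t, by simp⟩) from
          measurable_pi_apply _)
        (show Measurable (fun f : (({s, u, v} : Finset (Fin n)) → ℝ) =>
            (f ⟨s, hmem_s⟩, f ⟨u, hmem_u⟩, f ⟨v, hmem_v⟩)) from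
          (measurable_pi_apply _).prodMk
          ((measurable_pi_apply _).prodMk (measurable_pi_apply _)))
      exact this
    haveI : IsProbabilityMeasure (μ.map Y) := Measure.isProbabilityMeasure_map hYmeas.aemeasurable
    have hjoint : μ.map (fun ω => (x t ω, Y ω)) = ν.prod (μ.map Y) := by
      rw [← hmap t]
      exact (indepFun_iff_map_prod_eq_prod_map_map (hmeas t).aemeasurable
        hYmeas.aemeasurable).mp hindepY
    set Φ : ℝ × (ℝ × ℝ × ℝ) → ℝ :=
      fun q => G q.1 q.2.1 * g ν q.2.2.1 q.2.2.2 with hΦ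
    have hΦmeas : Measurable Φ := by
      have h1 : Measurable fun q : ℝ × (ℝ × ℝ × ℝ) => G q.1 q.2.1 :=
        hGm.comp (measurable_fst.prodMk (measurable_fst.comp measurable_snd))
      have h2 : Measurable fun q : ℝ × (ℝ × ℝ × ℝ) => g ν q.2.2.1 q.2.2.2 :=
        measurable_g2.comp (measurable_snd.comp measurable_snd)
      exact h1.mul h2
    have hΦbdd : ∀ q, |Φ q| ≤ 25 := by
      intro q
      have h := abs_mul_le_of_le (hGb q.1 q.2.1) (abs_g_le (ν := ν) q.2.2.1 q.2.2.2)
      norm_num at h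
      simpa [hΦ] using h
    have hchg : ∫ ω, G (x t ω) (x s ω) * g ν (x u ω) (x v ω) ∂μ
        = ∫ q, Φ q ∂(ν.prod (μ.map Y)) := by
      rw [← hjoint,
        integral_map ((hmeas t).aemeasurable.prodMk hYmeas.aemeasurable)
          hΦmeas.aestronglyMeasurable]
    rw [hchg, integral_prod_symm _ (integrable_of_bdd hΦmeas (C := 25) hΦbdd)]
    have hin : ∀ w : ℝ × ℝ × ℝ, (∫ a, Φ (a, w) ∂ν) = 0 := by
      intro w
      simp only [hΦ]
      rw [integral_mul_const, hGz w.1, zero_mul]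
    rw [integral_congr_ae (Filter.Eventually.of_forall hin), integral_zero]
  by_cases hne : (i₁, j₁) = (i₂, j₂)
  · rw [if_pos hne]
    rw [Prod.mk.injEq] at hne
    obtain ⟨hi, hj⟩ := hne
    subst hi; subst hj
    have hsq : (fun ω => g ν (x i₁ ω) (x j₁ ω) * g ν (x i₁ ω) (x j₁ ω))
        = fun ω => (fun p : ℝ × ℝ => (g ν p.1 p.2) ^ 2) ((fun ω => (x i₁ ω, x j₁ ω)) ω) := by
      funext ω; simp [pow_two]
    rw [hsq, ← integral_map ((hmeas i₁).aemeasurable.prodMk (hmeas j₁).aemeasurable)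
        (measurable_g2.pow_const 2).aestronglyMeasurable,
      hpair i₁ j₁ h₁.ne]
    exact integral_g_sq hatom
  · rw [if_neg hne]
    have happly_flip : ∀ (ht1 : j₁ ≠ i₂) (ht2 : j₁ ≠ j₂),
        ∫ ω, g ν (x i₁ ω) (x j₁ ω) * g ν (x i₂ ω) (x j₂ ω) ∂μ = 0 := by
      intro ht1 ht2
      have := hkey j₁ i₁ i₂ j₂ (fun a b => g ν b a)
        (measurable_g2.comp (measurable_snd.prodMk measurable_fst))
        (fun a b => abs_g_le b a) (fun b => integral_g_right hatom b) h₁.ne' ht1 ht2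
      exact this
    by_cases e1 : i₁ = i₂
    · -- then j₁ is private
      have ej : j₁ ≠ j₂ := fun h => hne (by rw [e1, h])
      have eji : j₁ ≠ i₂ := by rw [← e1]; exact h₁.ne'
      exact happly_flip eji ej
    · by_cases e2 : i₁ = j₂
      · have hj2 : j₁ ≠ j₂ := by rw [← e2]; exact h₁.ne'
        have hji2 : j₁ ≠ i₂ := by
          intro h
          exact lt_irrefl i₂ (h ▸ ((h₂.trans_eq e2.symm).trans h₁))
        exact happly_flip hji2 hj2
      · exact hkey i₁ j₁ i₂ j₂ (g ν) measurable_g2 (fun a b => abs_g_le a b)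
          (fun b => integral_g_left hatom b) h₁.ne e1 e2


end
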